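/- arXiv:1607.03947 — 3 statements merged into one kernel-verified Lean document; each statement's English description precedes it below -/
import Mathlib

section
/- For every integer m ≥ 7 with m ≡ 1 (mod 6), the polynomial y₁y₂(y₁+y₂)(y₁²+y₁y₂+y₂²)² divides the polynomial G_m^{(2)} = (y₁+y₂)^m − y₁^m − y₂^m in the polynomial ring ℚ[y₁,y₂]. -/
/-!
With `e = x² + xy + y²` and `q = xy(x + y)`, the elements `x`, `y`, `-(x + y)` are the roots of
`t³ - e t + q`, so their power sums `Pₙ` satisfy `Pₙ₊₃ = e Pₙ₊₁ - q Pₙ` with `P₁ = 0`, `P₂ = 2e`.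
Hence `Pₙ` is a combination of monomials `eᵃ qᵇ` with `2a + 3b = n`; for `n ≡ 1 (mod 6)` this
forces `b` odd and `a ≥ 2`, so `e² q ∣ Pₙ`. For odd `n`, `Pₙ = -((x + y)ⁿ - xⁿ - yⁿ)`.
-/

open MvPolynomial

section Recurrence

variable {R : Type*} [CommRing R]

theorem dvd_six_mul_add_of_recurrence {e q : R} {P : ℕ → R}
    (hrec : ∀ n, P (n + 3) = e * P (n + 1) - q * P n) (h1 : P 1 = 0)
    (h2 : e ∣ P 2) (k : ℕ) :
    e ^ 2 * q ∣ P (6 * k + 1) ∧ e ∣ P (6 * k + 2) ∧ q ∣ P (6 * k + 3) ∧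
      e ^ 2 ∣ P (6 * k + 4) ∧ e * q ∣ P (6 * k + 5) := by
  induction k with
  | zero =>
    have h3 : q ∣ P 3 := by simp [hrec 0, h1]
    have h4 : e ^ 2 ∣ P 4 := by simpa [hrec 1, h1, pow_two] using mul_dvd_mul_left e h2
    have h5 : e * q ∣ P 5 := by
      rw [hrec 2]
      exact dvd_sub (mul_dvd_mul_left e h3) (mul_comm e q ▸ mul_dvd_mul_left q h2)
    simpa [h1] using ⟨h2, h3, h4, h5⟩
  | succ k ih =>
    obtain ⟨h1, h2, h3, h4, h5⟩ := ih
    have h7 : e ^ 2 * q ∣ P (6 * k + 7) := by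
      rw [hrec (6 * k + 4)]
      exact dvd_sub (by simpa [pow_two, mul_assoc] using mul_dvd_mul_left e h5)
        (by simpa [mul_comm] using mul_dvd_mul_left q h4)
    have h8 : e ∣ P (6 * k + 8) := by
      rw [hrec (6 * k + 5)]
      exact dvd_sub (dvd_mul_right e _) ((dvd_mul_right e q).trans h5 |>.mul_left q)
    have h9 : q ∣ P (6 * k + 9) := by
      rw [hrec (6 * k + 6)]
      exact dvd_sub ((dvd_mul_left q _).trans h7 |>.mul_left e) (dvd_mul_right q _)
    have h10 : e ^ 2 ∣ P (6 * k + 10) := by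
      rw [hrec (6 * k + 7)]
      exact dvd_sub (by simpa [pow_two] using mul_dvd_mul_left e h8)
        ((dvd_mul_right _ q).trans h7 |>.mul_left q)
    have h11 : e * q ∣ P (6 * k + 11) := by
      rw [hrec (6 * k + 8)]
      exact dvd_sub (mul_dvd_mul_left e h9) (mul_comm e q ▸ mul_dvd_mul_left q h8)
    exact ⟨h7, h8, h9, h10, h11⟩

theorem add_pow_sub_pow_sub_pow_dvd (x y : R) {m : ℕ} (hm : m % 6 = 1) :
    x * y * (x + y) * (x ^ 2 + x * y + y ^ 2) ^ 2 ∣ (x + y) ^ m - x ^ m - y ^ m := by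
  set P : ℕ → R := fun n => x ^ n + y ^ n + (-(x + y)) ^ n
  have hrec : ∀ n, P (n + 3) = (x ^ 2 + x * y + y ^ 2) * P (n + 1) - x * y * (x + y) * P n :=
    fun n => by simp only [P]; ring
  obtain ⟨k, rfl⟩ : ∃ k, m = 6 * k + 1 := ⟨m / 6, by omega⟩
  have hP1 : P 1 = 0 := by simp only [P]; ring
  have hP2 : P 2 = (x ^ 2 + x * y + y ^ 2) * 2 := by simp only [P]; ring
  have hdvd := (dvd_six_mul_add_of_recurrence hrec hP1 (Dvd.intro 2 hP2.symm) k).1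
  have hodd : Odd (6 * k + 1) := ⟨3 * k, by ring⟩
  simp only [P, hodd.neg_pow] at hdvd
  convert (dvd_neg).2 hdvd using 1 <;> ring

end Recurrence

theorem G_divisibility_mod6_eq1_general (m : ℕ) (hmod : m % 6 = 1) :
    (X 0 * X 1 * (X 0 + X 1) * ((X 0) ^ 2 + X 0 * X 1 + (X 1) ^ 2) ^ 2 :
        MvPolynomial (Fin 2) ℚ) ∣
      ((X 0 + X 1) ^ m - (X 0) ^ m - (X 1) ^ m) :=
  add_pow_sub_pow_sub_pow_dvd (X 0) (X 1) hmod

theorem G_divisibility_mod6_eq1 (m : ℕ) (hm : 7 ≤ m) (hmod : m % 6 = 1) :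
    (X 0 * X 1 * (X 0 + X 1) * ((X 0) ^ 2 + X 0 * X 1 + (X 1) ^ 2) ^ 2 :
        MvPolynomial (Fin 2) ℚ) ∣
      ((X 0 + X 1) ^ m - (X 0) ^ m - (X 1) ^ m) :=
  G_divisibility_mod6_eq1_general m hmod
end

section
/- For every integer l ≥ 4 and all integers m, n with 2 ≤ m < n, every common divisor of G_m^{(l)} and G_n^{(l)} in the polynomial ring ℚ[y₁,…,y_l] is a unit; that is, the polynomials (y₁+⋯+y_l)^m − y₁^m − ⋯ − y_l^m and (y₁+⋯+y_l)^n − y₁^n − ⋯ − y_l^n have no nonconstant common factor. -/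
/-!
If `d` divides `G_m` and `G_n`, it divides every Jacobian minor `∂ᵢG_m ∂ⱼG_n - ∂ⱼG_m ∂ᵢG_n`.
Since `∂ᵢG_m = m (S^(m-1) - xᵢ^(m-1))` with `S = x₁ + ⋯ + x_l`, the cyclic sum of the three minors
on indices `i₀, i₁, i₂` no longer involves `S`: it is the generalized Vandermonde determinant
`det (1, xᵢ^(m-1), xᵢ^(n-1))`, a nonzero polynomial in `x_{i₀}, x_{i₁}, x_{i₂}` only. As `l ≥ 4`,
every variable is avoided by some such triple, so `d` involves no variable at all and is a
nonzero constant.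
-/

open MvPolynomial

lemma exists_injective_fin_notMem_range {σ : Type*} [Fintype σ] {n : ℕ} (h : n < Fintype.card σ)
    (k : σ) : ∃ i : Fin n → σ, Function.Injective i ∧ k ∉ Set.range i := by
  classical
  obtain ⟨e⟩ := Function.Embedding.nonempty_of_card_le (α := Fin n) (β := {x | x ≠ k})
    (by rw [Set.card_ne_eq, Fintype.card_fin]; omega)
  exact ⟨(↑) ∘ e, Subtype.val_injective.comp e.injective, fun ⟨j, hj⟩ => (e j).2 hj⟩

namespace MvPolynomial

variable {σ R : Type*}

lemma vars_subset_vars_of_dvd [CommSemiring R] [NoZeroDivisors R] {p q : MvPolynomial σ R}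
    (h : p ∣ q) (hq : q ≠ 0) : p.vars ⊆ q.vars := by
  classical
  obtain ⟨r, rfl⟩ := h
  rw [vars_def, vars_def, degrees_mul_eq (left_ne_zero_of_mul hq) (right_ne_zero_of_mul hq),
    Multiset.toFinset_add]
  exact Finset.subset_union_left

lemma notMem_vars_rename_of_notMem_range {τ : Type*} [CommSemiring R] {f : σ → τ} {k : τ}
    (hk : k ∉ Set.range f) (p : MvPolynomial σ R) : k ∉ (rename f p).vars := fun hkp => by
  classical
  obtain ⟨j, -, rfl⟩ := Finset.mem_image.mp (vars_rename f p hkp)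
  exact hk ⟨j, rfl⟩

lemma isUnit_of_forall_exists_dvd_notMem_vars [Field R] [Nonempty σ] {d : MvPolynomial σ R}
    (h : ∀ k, ∃ q, d ∣ q ∧ q ≠ 0 ∧ k ∉ q.vars) : IsUnit d := by
  obtain ⟨q, hdq, hq, -⟩ := h (Classical.arbitrary σ)
  have hd : d ≠ 0 := ne_zero_of_dvd_ne_zero hq hdq
  have hvars : d.vars = ∅ := Finset.eq_empty_of_forall_notMem fun k hk => by
    obtain ⟨q, hdq, hq, hkq⟩ := h k
    exact hkq (vars_subset_vars_of_dvd hdq hq hk)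
  rw [vars_eq_empty_iff_eq_C] at hvars
  rw [hvars] at hd ⊢
  exact (Ne.isUnit fun h0 => hd (by rw [h0, map_zero])).map C

lemma dvd_pderiv_mul_sub_pderiv_mul [CommRing R] {d f g : MvPolynomial σ R} (hf : d ∣ f)
    (hg : d ∣ g) (i j : σ) : d ∣ pderiv i f * pderiv j g - pderiv j f * pderiv i g := by
  obtain ⟨f, rfl⟩ := hf
  obtain ⟨g, rfl⟩ := hg
  simp only [pderiv_mul]
  exact ⟨pderiv i d * f * pderiv j g + pderiv i f * pderiv j d * g + d * pderiv i f * pderiv j g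
    - pderiv j d * f * pderiv i g - pderiv j f * pderiv i d * g - d * pderiv j f * pderiv i g,
    by ring⟩

end MvPolynomial

noncomputable def gFunction (σ R : Type*) [Fintype σ] [CommRing R] (m : ℕ) : MvPolynomial σ R :=
  (∑ i, X i) ^ m - ∑ i, X i ^ m

/-- The determinant with rows `(1, 1, 1)`, `(x₀^a, x₁^a, x₂^a)`, `(x₀^b, x₁^b, x₂^b)`, expanded
after subtracting the first column from the other two. -/
noncomputable def genVandermonde (R : Type*) [CommRing R] (a b : ℕ) : MvPolynomial (Fin 3) R :=
  (X 0 ^ a - X 1 ^ a) * (X 0 ^ b - X 2 ^ b) - (X 0 ^ a - X 2 ^ a) * (X 0 ^ b - X 1 ^ b)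

variable {σ R : Type*}

lemma pderiv_gFunction [Fintype σ] [CommRing R] (m : ℕ) (i : σ) :
    pderiv i (gFunction σ R m) =
      (m : MvPolynomial σ R) * ((∑ j, X j) ^ (m - 1) - X i ^ (m - 1)) := by
  classical
  simp only [gFunction, map_sub, Derivation.leibniz_pow, map_sum, pderiv_X, Pi.single_apply,
    Finset.sum_ite_eq', Finset.mem_univ, ↓reduceIte, smul_eq_mul, mul_one, nsmul_eq_mul, mul_ite,
    mul_zero]
  ring

lemma genVandermonde_ne_zero [CommRing R] [CharZero R] {a b : ℕ} (ha : 0 < a) (hab : a < b) :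
    genVandermonde R a b ≠ 0 := by
  intro h
  have h2 := congrArg (eval ![0, 1, 2]) h
  simp only [genVandermonde, map_sub, map_mul, map_pow, eval_X, Matrix.cons_val_zero,
    Matrix.cons_val_one, Matrix.cons_val, zero_pow ha.ne', zero_pow (ha.trans hab).ne', one_pow,
    zero_sub, mul_neg, neg_mul, one_mul, neg_neg, mul_one, map_zero, sub_eq_zero] at h2
  exact hab.ne' (Nat.pow_right_injective le_rfl (by exact_mod_cast h2))

lemma dvd_rename_genVandermonde_of_dvd_gFunction [Field R] [CharZero R] [Fintype σ]
    {d : MvPolynomial σ R} {m n : ℕ} (hm : m ≠ 0) (hn : n ≠ 0) (hdm : d ∣ gFunction σ R m)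
    (hdn : d ∣ gFunction σ R n) (i : Fin 3 → σ) :
    d ∣ rename i (genVandermonde R (m - 1) (n - 1)) := by
  set S : MvPolynomial σ R := ∑ j, X j
  have hunit : IsUnit ((m * n : ℕ) : MvPolynomial σ R) := by
    rw [← map_natCast C]
    exact (Ne.isUnit (by positivity)).map C
  have minor : ∀ j k, d ∣ (S ^ (m - 1) - X j ^ (m - 1)) * (S ^ (n - 1) - X k ^ (n - 1))
      - (S ^ (m - 1) - X k ^ (m - 1)) * (S ^ (n - 1) - X j ^ (n - 1)) := by
    intro j k
    have h := dvd_pderiv_mul_sub_pderiv_mul hdm hdn j k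
    rw [pderiv_gFunction, pderiv_gFunction, pderiv_gFunction, pderiv_gFunction] at h
    refine hunit.dvd_mul_left.mp ?_
    convert h using 1
    push_cast
    ring
  convert dvd_add (dvd_add (minor (i 0) (i 1)) (minor (i 1) (i 2))) (minor (i 2) (i 0)) using 1
  simp only [genVandermonde, map_sub, map_mul, map_pow, rename_X]
  ring

theorem G_coprime_of_four_le (l : ℕ) (hl : 4 ≤ l) (m n : ℕ) (hm : 2 ≤ m) (hmn : m < n)
    (d : MvPolynomial (Fin l) ℚ)
    (hdm : d ∣ ((∑ i : Fin l, X i) ^ m - ∑ i : Fin l, (X i) ^ m))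
    (hdn : d ∣ ((∑ i : Fin l, X i) ^ n - ∑ i : Fin l, (X i) ^ n)) :
    IsUnit d := by
  have : Nonempty (Fin l) := ⟨⟨0, by omega⟩⟩
  refine isUnit_of_forall_exists_dvd_notMem_vars fun k => ?_
  obtain ⟨i, hi, hk⟩ :=
    exists_injective_fin_notMem_range (n := 3) (by rw [Fintype.card_fin]; omega) k
  have hne : rename i (genVandermonde ℚ (m - 1) (n - 1)) ≠ 0 :=
    (map_ne_zero_iff _ (rename_injective i hi)).mpr (genVandermonde_ne_zero (by omega) (by omega))
  exact ⟨_, dvd_rename_genVandermonde_of_dvd_gFunction (by omega) (by omega) hdm hdn i, hne,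
    notMem_vars_rename_of_notMem_range hk _⟩
end

section
/- Let v : ℝ × ℝ → ℝ be a smooth function which solves the Fordy–Gibbons equation v_t = v_5 − 5 v_3 v_1 − 5 v_3 v² − 5 v_2² − 20 v_2 v_1 v − 5 v_1³ + 5 v_1 v⁴. Then the Miura transform u = v_1 − v² solves the Sawada–Kotera equation u_t = u_5 + 5 u_3 u + 5 u_2 u_1 + 5 u_1 u². This is the bosonic component of the paper's claim that if Φ solves the supersymmetric Fordy–Gibbons equation, then Φ_1 − Φ(DΦ) solves the supersymmetric Sawada–Kotera equation Φ_t = Φ_5 + 5Φ_3(DΦ) + 5Φ_2(DΦ_1) + 5Φ_1(DΦ)². -/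
/-- Partial derivative with respect to the space variable (first argument). -/
noncomputable def dx (f : ℝ × ℝ → ℝ) : ℝ × ℝ → ℝ :=
  fun p => deriv (fun y => f (y, p.2)) p.1

/-- Partial derivative with respect to the time variable (second argument). -/
noncomputable def dt (f : ℝ × ℝ → ℝ) : ℝ × ℝ → ℝ :=
  fun p => deriv (fun s => f (p.1, s)) p.2

lemma dx_eq_fderiv (f : ℝ × ℝ → ℝ) (hf : Differentiable ℝ f) :
    dx f = fun p => fderiv ℝ f p (1, 0) := by
  funext p
  have h1 : HasDerivAt (fun y : ℝ => (y, p.2)) ((1:ℝ), (0:ℝ)) p.1 :=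
    HasDerivAt.prodMk (hasDerivAt_id p.1) (hasDerivAt_const _ _)
  exact ((hf p).hasFDerivAt.comp_hasDerivAt p.1 h1).deriv

lemma dt_eq_fderiv (f : ℝ × ℝ → ℝ) (hf : Differentiable ℝ f) :
    dt f = fun p => fderiv ℝ f p (0, 1) := by
  funext p
  have h1 : HasDerivAt (fun s : ℝ => (p.1, s)) ((0:ℝ), (1:ℝ)) p.2 :=
    HasDerivAt.prodMk (hasDerivAt_const _ _) (hasDerivAt_id p.2)
  exact ((hf p).hasFDerivAt.comp_hasDerivAt p.2 h1).deriv

lemma contDiff_dx {f : ℝ × ℝ → ℝ} (hf : ContDiff ℝ (⊤ : ℕ∞) f) :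
    ContDiff ℝ (⊤ : ℕ∞) (dx f) := by
  rw [dx_eq_fderiv f (hf.differentiable (by simp))]
  exact ((contDiff_infty_iff_fderiv.mp hf).2).clm_apply contDiff_const

lemma dx_sub' (f g : ℝ × ℝ → ℝ) (hf : Differentiable ℝ f) (hg : Differentiable ℝ g) (p : ℝ × ℝ) :
    dx (fun q => f q - g q) p = dx f p - dx g p := by
  rw [congrFun (dx_eq_fderiv (fun q => f q - g q) (hf.sub hg)) p,
    congrFun (dx_eq_fderiv f hf) p, congrFun (dx_eq_fderiv g hg) p,
    fderiv_fun_sub (hf p) (hg p)]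
  simp

lemma dx_add' (f g : ℝ × ℝ → ℝ) (hf : Differentiable ℝ f) (hg : Differentiable ℝ g) (p : ℝ × ℝ) :
    dx (fun q => f q + g q) p = dx f p + dx g p := by
  rw [congrFun (dx_eq_fderiv (fun q => f q + g q) (hf.add hg)) p,
    congrFun (dx_eq_fderiv f hf) p, congrFun (dx_eq_fderiv g hg) p,
    fderiv_fun_add (hf p) (hg p)]
  simp

lemma dx_mul' (f g : ℝ × ℝ → ℝ) (hf : Differentiable ℝ f) (hg : Differentiable ℝ g) (p : ℝ × ℝ) :
    dx (fun q => f q * g q) p = dx f p * g p + f p * dx g p := by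
  rw [congrFun (dx_eq_fderiv (fun q => f q * g q) (hf.mul hg)) p,
    congrFun (dx_eq_fderiv f hf) p, congrFun (dx_eq_fderiv g hg) p,
    fderiv_fun_mul (hf p) (hg p)]
  simp; ring

lemma dx_const_mul' (c : ℝ) (f : ℝ × ℝ → ℝ) (hf : Differentiable ℝ f) (p : ℝ × ℝ) :
    dx (fun q => c * f q) p = c * dx f p := by
  rw [congrFun (dx_eq_fderiv (fun q => c * f q) (hf.const_mul c)) p,
    congrFun (dx_eq_fderiv f hf) p, fderiv_const_mul (hf p) c]
  simp

lemma dt_sub' (f g : ℝ × ℝ → ℝ) (hf : Differentiable ℝ f) (hg : Differentiable ℝ g) (p : ℝ × ℝ) :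
    dt (fun q => f q - g q) p = dt f p - dt g p := by
  rw [congrFun (dt_eq_fderiv (fun q => f q - g q) (hf.sub hg)) p,
    congrFun (dt_eq_fderiv f hf) p, congrFun (dt_eq_fderiv g hg) p,
    fderiv_fun_sub (hf p) (hg p)]
  simp

lemma dt_mul' (f g : ℝ × ℝ → ℝ) (hf : Differentiable ℝ f) (hg : Differentiable ℝ g) (p : ℝ × ℝ) :
    dt (fun q => f q * g q) p = dt f p * g p + f p * dt g p := by
  rw [congrFun (dt_eq_fderiv (fun q => f q * g q) (hf.mul hg)) p,
    congrFun (dt_eq_fderiv f hf) p, congrFun (dt_eq_fderiv g hg) p,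
    fderiv_fun_mul (hf p) (hg p)]
  simp; ring

lemma clairaut {f : ℝ × ℝ → ℝ} (hf : ContDiff ℝ (⊤ : ℕ∞) f) : dt (dx f) = dx (dt f) := by
  have hd : Differentiable ℝ f := hf.differentiable (by simp)
  have hf' : ContDiff ℝ (⊤ : ℕ∞) (fderiv ℝ f) := (contDiff_infty_iff_fderiv.mp hf).2
  have hd' : Differentiable ℝ (fderiv ℝ f) := hf'.differentiable (by simp)
  rw [dx_eq_fderiv f hd, dt_eq_fderiv f hd]
  have hdx : Differentiable ℝ (fun p : ℝ × ℝ => fderiv ℝ f p (1, 0)) :=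
    fun p => ((hd' p).clm_apply (differentiableAt_const _))
  have hdt : Differentiable ℝ (fun p : ℝ × ℝ => fderiv ℝ f p (0, 1)) :=
    fun p => ((hd' p).clm_apply (differentiableAt_const _))
  rw [dt_eq_fderiv _ hdx, dx_eq_fderiv _ hdt]
  funext p
  have h1 : fderiv ℝ (fun q : ℝ × ℝ => fderiv ℝ f q (1, 0)) p (0, 1)
      = fderiv ℝ (fderiv ℝ f) p (0, 1) (1, 0) := by
    rw [fderiv_clm_apply (hd' p) (differentiableAt_const _)]
    simp
  have h2 : fderiv ℝ (fun q : ℝ × ℝ => fderiv ℝ f q (0, 1)) p (1, 0)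
      = fderiv ℝ (fderiv ℝ f) p (1, 0) (0, 1) := by
    rw [fderiv_clm_apply (hd' p) (differentiableAt_const _)]
    simp
  rw [h1, h2]
  exact second_derivative_symmetric (fun y => (hd y).hasFDerivAt)
    (hd' p).hasFDerivAt _ _

lemma dx_const' (c : ℝ) (p : ℝ × ℝ) : dx (fun _ => c) p = 0 := by
  simp [dx]

/-- Miura transformation: if $v$ solves the Fordy–Gibbons equation, then
$u = v_1 - v^2$ solves the Sawada–Kotera equation. -/
theorem miura_FordyGibbons_to_SawadaKotera (v : ℝ × ℝ → ℝ) (hv : ContDiff ℝ (⊤ : ℕ∞) v)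
    (heq : ∀ p, dt v p =
      dx (dx (dx (dx (dx v)))) p - 5 * dx (dx (dx v)) p * dx v p
        - 5 * dx (dx (dx v)) p * (v p) ^ 2 - 5 * (dx (dx v) p) ^ 2
        - 20 * dx (dx v) p * dx v p * v p - 5 * (dx v p) ^ 3
        + 5 * dx v p * (v p) ^ 4) :
    ∀ p, dt (fun q => dx v q - (v q) ^ 2) p =
      dx (dx (dx (dx (dx (fun q => dx v q - (v q) ^ 2))))) p
        + 5 * dx (dx (dx (fun q => dx v q - (v q) ^ 2))) p * (dx v p - (v p) ^ 2)
        + 5 * dx (dx (fun q => dx v q - (v q) ^ 2)) p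
            * dx (fun q => dx v q - (v q) ^ 2) p
        + 5 * dx (fun q => dx v q - (v q) ^ 2) p * (dx v p - (v p) ^ 2) ^ 2 := by
  have h0 : ContDiff ℝ (⊤ : ℕ∞) v := hv.of_le (by simp)
  have h1 := contDiff_dx h0
  have h2 := contDiff_dx h1
  have h3 := contDiff_dx h2
  have h4 := contDiff_dx h3
  have h5 := contDiff_dx h4
  have one_le : ((⊤ : ℕ∞) : WithTop ℕ∞) ≠ 0 := by simp
  have d0 : Differentiable ℝ v := h0.differentiable one_le
  have d1 : Differentiable ℝ (dx v) := h1.differentiable one_le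
  have d2 : Differentiable ℝ (dx (dx v)) := h2.differentiable one_le
  have d3 : Differentiable ℝ (dx (dx (dx v))) := h3.differentiable one_le
  have d4 : Differentiable ℝ (dx (dx (dx (dx v)))) := h4.differentiable one_le
  have d5 : Differentiable ℝ (dx (dx (dx (dx (dx v))))) := h5.differentiable one_le
  have hU : (fun q => dx v q - (v q) ^ 2) = fun q => dx v q - v q * v q := by
    funext q; ring
  have e1 : dx (fun q => dx v q - v q * v q)
      = fun p => dx (dx v) p - 2 * (v p * dx v p) := by
    funext p
    simp (disch := fun_prop) only [dx_sub', dx_mul', dx_const_mul', dx_add', dx_const']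
    ring
  have e2 : dx (fun p => dx (dx v) p - 2 * (v p * dx v p))
      = fun p => dx (dx (dx v)) p - 2 * (dx v p * dx v p) - 2 * (v p * dx (dx v) p) := by
    funext p
    simp (disch := fun_prop) only [dx_sub', dx_mul', dx_const_mul', dx_add', dx_const']
    ring
  have e3 : dx (fun p => dx (dx (dx v)) p - 2 * (dx v p * dx v p) - 2 * (v p * dx (dx v) p))
      = fun p => dx (dx (dx (dx v))) p - 6 * (dx v p * dx (dx v) p)
          - 2 * (v p * dx (dx (dx v)) p) := by
    funext p
    simp (disch := fun_prop) only [dx_sub', dx_mul', dx_const_mul', dx_add', dx_const']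
    ring
  have e4 : dx (fun p => dx (dx (dx (dx v))) p - 6 * (dx v p * dx (dx v) p)
          - 2 * (v p * dx (dx (dx v)) p))
      = fun p => dx (dx (dx (dx (dx v)))) p - 6 * (dx (dx v) p * dx (dx v) p)
          - 8 * (dx v p * dx (dx (dx v)) p) - 2 * (v p * dx (dx (dx (dx v))) p) := by
    funext p
    simp (disch := fun_prop) only [dx_sub', dx_mul', dx_const_mul', dx_add', dx_const']
    ring
  have e5 : dx (fun p => dx (dx (dx (dx (dx v)))) p - 6 * (dx (dx v) p * dx (dx v) p)
          - 8 * (dx v p * dx (dx (dx v)) p) - 2 * (v p * dx (dx (dx (dx v))) p))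
      = fun p => dx (dx (dx (dx (dx (dx v))))) p - 20 * (dx (dx v) p * dx (dx (dx v)) p)
          - 10 * (dx v p * dx (dx (dx (dx v))) p) - 2 * (v p * dx (dx (dx (dx (dx v)))) p) := by
    funext p
    simp (disch := fun_prop) only [dx_sub', dx_mul', dx_const_mul', dx_add', dx_const']
    ring
  have hF : dt v = fun p => dx (dx (dx (dx (dx v)))) p
      - 5 * (dx (dx (dx v)) p * dx v p)
      - 5 * (dx (dx (dx v)) p * (v p * v p))
      - 5 * (dx (dx v) p * dx (dx v) p)
      - 20 * (dx (dx v) p * (dx v p * v p))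
      - 5 * (dx v p * (dx v p * dx v p))
      + 5 * (dx v p * (v p * (v p * (v p * v p)))) := by
    funext p; rw [heq p]; ring
  intro p
  have et : dt (fun q => dx v q - v q * v q) p
      = dt (dx v) p - (dt v p * v p + v p * dt v p) := by
    rw [dt_sub' (dx v) (fun q => v q * v q) d1 (d0.mul d0) p, dt_mul' v v d0 d0 p]
  simp only [hU]
  rw [et, congrFun (clairaut h0) p, hF]
  simp only [e1, e2, e3, e4, e5]
  simp (disch := fun_prop) only [dx_sub', dx_mul', dx_const_mul', dx_add', dx_const']
  ring
end
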